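/- Let k ≥ 10^8 and let edges of K_k be added one at a time. Call an edge 'rare' if it is among the first ⌈4(log k)^2⌉ edges added at one of its endpoints, and 'connective' if, at the moment just before it is added, it joins one of its endpoints z to a connected component of at least ⌈4(log k)^2⌉ vertices not containing z. If {v1, v2, v3} is a triple of distinct vertices none of whose three connecting edges is rare or connective, and {v_a, v_b} is the first-added among the three edges of the triple with v_c the remaining vertex, then at the moment just before the edge {v_b, v_c} is added, both v_b and v_c lie in the connected component of v_a, and at the moment just before {v_a, v_c} is added, both v_a and v_c lie in the connected component of v_b. -/

import Mathlib

/-- The graph consisting of the edges added up to time `t` in the edge ordering `σ`. -/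
def edgeOrderGraph (k : ℕ) (σ : Sym2 (Fin k) → ℕ) (t : ℕ) : SimpleGraph (Fin k) :=
  SimpleGraph.fromEdgeSet {e : Sym2 (Fin k) | σ e ≤ t}

/-- An edge is 'rare' if for some endpoint `z` it is among the first `⌈4 (log k)^2⌉`
edges incident to `z` in the order of addition. -/
def IsRareEdge (k : ℕ) (σ : Sym2 (Fin k) → ℕ) (e : Sym2 (Fin k)) : Prop :=
  ∃ z ∈ e, {f : Sym2 (Fin k) | ¬ f.IsDiag ∧ z ∈ f ∧ σ f ≤ σ e}.ncard
    ≤ ⌈4 * (Real.log k) ^ 2⌉₊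

/-- An edge `e = {z, w}` is 'connective' if just before it is added, it joins an endpoint
`z` to a connected component of at least `⌈4 (log k)^2⌉` vertices not containing `z`. -/
def IsConnectiveEdge (k : ℕ) (σ : Sym2 (Fin k) → ℕ) (e : Sym2 (Fin k)) : Prop :=
  ∃ z w : Fin k, e = s(z, w) ∧
    ⌈4 * (Real.log k) ^ 2⌉₊ ≤
      {x : Fin k | (edgeOrderGraph k σ (σ e - 1)).Reachable x w}.ncard ∧
    ¬ (edgeOrderGraph k σ (σ e - 1)).Reachable z w

/-!
A non-rare edge `zw` is preceded by at least `⌈4 (log k)^2⌉` edges at `w`, so just before it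
is added the component of `w` already has that many vertices; as `zw` is not connective, `z`
must then lie in that component. Applied to `v2v3` and `v1v3`, and combined with the earlier
edge `v1v2`, this places the whole triple in one component at both moments.
-/

namespace SimpleGraph

variable {V : Type*} [Finite V] (G : SimpleGraph V)

theorem ncard_neighborSet_le_ncard_reachable (v : V) :
    (G.neighborSet v).ncard ≤ {x | G.Reachable x v}.ncard :=
  Set.ncard_le_ncard (fun _ hx => (G.adj_symm hx).reachable) (Set.toFinite _)

theorem ncard_incidenceSet_le_ncard_reachable (v : V) :
    (G.incidenceSet v).ncard ≤ {x | G.Reachable x v}.ncard := by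
  classical
  exact (Nat.card_congr (G.incidenceSetEquivNeighborSet v)).trans_le
    (G.ncard_neighborSet_le_ncard_reachable v)

end SimpleGraph

section EdgeOrder

variable {k : ℕ} {σ : Sym2 (Fin k) → ℕ}

theorem mem_incidenceSet_edgeOrderGraph {t : ℕ} {w : Fin k} {f : Sym2 (Fin k)} :
    f ∈ (edgeOrderGraph k σ t).incidenceSet w ↔ (σ f ≤ t ∧ ¬ f.IsDiag) ∧ w ∈ f := by
  simp [SimpleGraph.incidenceSet, edgeOrderGraph, SimpleGraph.edgeSet_fromEdgeSet]

theorem edgeOrderGraph_adj {t : ℕ} {u v : Fin k} (huv : u ≠ v) (ht : σ s(u, v) ≤ t) :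
    (edgeOrderGraph k σ t).Adj u v :=
  (SimpleGraph.fromEdgeSet_adj _).2 ⟨ht, huv⟩

theorem reachable_of_not_isRareEdge_of_not_isConnectiveEdge
    (hσ : Set.InjOn σ {e | ¬ e.IsDiag}) {z w : Fin k}
    (hrare : ¬ IsRareEdge k σ s(z, w)) (hconn : ¬ IsConnectiveEdge k σ s(z, w)) :
    (edgeOrderGraph k σ (σ s(z, w) - 1)).Reachable z w := by
  by_cases hzw : z = w
  · exact hzw ▸ .refl z
  by_contra hunreach
  refine hconn ⟨z, w, rfl, ?_, hunreach⟩
  set S := {f : Sym2 (Fin k) | ¬ f.IsDiag ∧ w ∈ f ∧ σ f ≤ σ s(z, w)}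
  have hedge : ¬ s(z, w).IsDiag := by simpa using hzw
  have hlarge : ⌈4 * Real.log k ^ 2⌉₊ < S.ncard :=
    not_le.1 fun hle => hrare ⟨w, Sym2.mem_mk_right z w, hle⟩
  have hearlier : S \ {s(z, w)} ⊆ (edgeOrderGraph k σ (σ s(z, w) - 1)).incidenceSet w := by
    rintro f ⟨⟨hf, hwf, hle⟩, hne⟩
    have hσne : σ f ≠ σ s(z, w) := fun h => hne (hσ hf hedge h)
    exact mem_incidenceSet_edgeOrderGraph.2 ⟨⟨by omega, hf⟩, hwf⟩
  have hcard : S.ncard - 1 = (S \ {s(z, w)}).ncard :=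
    (Set.ncard_sdiff_singleton_of_mem (show s(z, w) ∈ S from
      ⟨hedge, Sym2.mem_mk_right z w, le_rfl⟩)).symm
  calc ⌈4 * Real.log k ^ 2⌉₊ ≤ S.ncard - 1 := by omega
    _ = (S \ {s(z, w)}).ncard := hcard
    _ ≤ ((edgeOrderGraph k σ (σ s(z, w) - 1)).incidenceSet w).ncard :=
      Set.ncard_le_ncard hearlier (Set.toFinite _)
    _ ≤ _ := SimpleGraph.ncard_incidenceSet_le_ncard_reachable _ w

end EdgeOrder

theorem stmt_6_general (k : ℕ) (σ : Sym2 (Fin k) → ℕ)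
    (hσ : Set.BijOn σ {e : Sym2 (Fin k) | ¬ e.IsDiag} (Set.Icc 1 (k * (k - 1) / 2)))
    (v1 v2 v3 : Fin k) (h12 : v1 ≠ v2)
    (hgood : ∀ e ∈ ({s(v1, v2), s(v1, v3), s(v2, v3)} : Set (Sym2 (Fin k))),
      ¬ IsRareEdge k σ e ∧ ¬ IsConnectiveEdge k σ e)
    (hfirst1 : σ s(v1, v2) < σ s(v1, v3)) (hfirst2 : σ s(v1, v2) < σ s(v2, v3)) :
    ((edgeOrderGraph k σ (σ s(v2, v3) - 1)).Reachable v1 v2 ∧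
      (edgeOrderGraph k σ (σ s(v2, v3) - 1)).Reachable v1 v3) ∧
    ((edgeOrderGraph k σ (σ s(v1, v3) - 1)).Reachable v2 v1 ∧
      (edgeOrderGraph k σ (σ s(v1, v3) - 1)).Reachable v2 v3) := by
  obtain ⟨hrare23, hconn23⟩ := hgood s(v2, v3) (by simp)
  obtain ⟨hrare13, hconn13⟩ := hgood s(v1, v3) (by simp)
  have h23 := reachable_of_not_isRareEdge_of_not_isConnectiveEdge hσ.injOn hrare23 hconn23
  have h13 := reachable_of_not_isRareEdge_of_not_isConnectiveEdge hσ.injOn hrare13 hconn13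
  have hadj23 : (edgeOrderGraph k σ (σ s(v2, v3) - 1)).Adj v1 v2 :=
    edgeOrderGraph_adj h12 (by omega)
  have hadj13 : (edgeOrderGraph k σ (σ s(v1, v3) - 1)).Adj v1 v2 :=
    edgeOrderGraph_adj h12 (by omega)
  exact ⟨⟨hadj23.reachable, hadj23.reachable.trans h23⟩,
    ⟨hadj13.symm.reachable, hadj13.symm.reachable.trans h13⟩⟩

/-- Let `k ≥ 10^8`. If `{v1, v2, v3}` is a triple of distinct vertices none
of whose three connecting edges is rare or connective, and `{v1, v2}` is the first-added
of the three edges (so `v3` is the remaining vertex), then just before `{v2, v3}` is added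
both `v2` and `v3` lie in the component of `v1`, and just before `{v1, v3}` is added both
`v1` and `v3` lie in the component of `v2`. -/
theorem stmt_6 (k : ℕ) (hk : 10 ^ 8 ≤ k) (σ : Sym2 (Fin k) → ℕ)
    (hσ : Set.BijOn σ {e : Sym2 (Fin k) | ¬ e.IsDiag} (Set.Icc 1 (k * (k - 1) / 2)))
    (v1 v2 v3 : Fin k) (h12 : v1 ≠ v2) (h13 : v1 ≠ v3) (h23 : v2 ≠ v3)
    (hgood : ∀ e ∈ ({s(v1, v2), s(v1, v3), s(v2, v3)} : Set (Sym2 (Fin k))),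
      ¬ IsRareEdge k σ e ∧ ¬ IsConnectiveEdge k σ e)
    (hfirst1 : σ s(v1, v2) < σ s(v1, v3)) (hfirst2 : σ s(v1, v2) < σ s(v2, v3)) :
    ((edgeOrderGraph k σ (σ s(v2, v3) - 1)).Reachable v1 v2 ∧
      (edgeOrderGraph k σ (σ s(v2, v3) - 1)).Reachable v1 v3) ∧
    ((edgeOrderGraph k σ (σ s(v1, v3) - 1)).Reachable v2 v1 ∧
      (edgeOrderGraph k σ (σ s(v1, v3) - 1)).Reachable v2 v3) :=
  stmt_6_general k σ hσ v1 v2 v3 h12 hgood hfirst1 hfirst2
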